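/- Let G = H₁ ∗_K H₂ be a nondegenerate amalgamated free product (H₁ ≠ K and H₂ ≠ K). Every element of G of finite order is conjugate to an element of the image of H₁ or of the image of H₂. Consequently, if H₁ and H₂ are torsion free, then G is torsion free. -/

import Mathlib

/-!
Write an element as `k * g₁ ⋯ gₙ` with `k` in the amalgamated subgroup and consecutive letters
`gᵢ` from different factors, none of them in the image of `K`. If the first and last letters come
from the same factor, conjugating by the last letter merges it into the first one and shortens the
word. Otherwise the word is cyclically reduced: its powers are again reduced words, hence
nontrivial by the normal form theorem, so the element has infinite order. Induction on the length
leaves a finite-order element conjugate to a single letter.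
-/

open Monoid

def Monoid.IsTorsionFree (G : Type*) [Monoid G] : Prop :=
  ∀ g : G, g ≠ 1 → ¬IsOfFinOrder g

namespace Monoid.PushoutI

open CoprodI

variable {ι : Type*} {K : Type*} [Group K] {H : ι → Type*} [∀ i, Group (H i)]
  {φ : ∀ i, K →* H i}

variable (φ) in
def listProd (l : List (Σ i, H i)) : PushoutI φ :=
  (l.map fun x => of x.1 x.2).prod

variable (φ) in
def IsReducedList (l : List (Σ i, H i)) : Prop :=
  l.IsChain (fun x y => x.1 ≠ y.1) ∧ ∀ x ∈ l, x.2 ∉ (φ x.1).range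

@[simp]
lemma listProd_nil : listProd φ ([] : List (Σ i, H i)) = 1 := rfl

@[simp]
lemma listProd_cons (x : Σ i, H i) (l : List (Σ i, H i)) :
    listProd φ (x :: l) = of x.1 x.2 * listProd φ l := by
  simp [listProd]

@[simp]
lemma listProd_append (l₁ l₂ : List (Σ i, H i)) :
    listProd φ (l₁ ++ l₂) = listProd φ l₁ * listProd φ l₂ := by
  simp [listProd]

lemma listProd_flatten_replicate (m : ℕ) (l : List (Σ i, H i)) :
    listProd φ (List.replicate m l).flatten = listProd φ l ^ m := by
  induction m with
  | zero => simp
  | succ m ih => rw [List.replicate_succ', List.flatten_append, listProd_append, ih,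
      List.flatten_singleton, pow_succ]

lemma base_mul_of (k : K) (i : ι) (a : H i) : base φ k * of i a = of i (φ i k * a) := by
  rw [map_mul, of_apply_eq_base]

lemma isReducedList_cons {x : Σ i, H i} {l : List (Σ i, H i)} :
    IsReducedList φ (x :: l) ↔
      x.2 ∉ (φ x.1).range ∧ (∀ y ∈ l.head?, x.1 ≠ y.1) ∧ IsReducedList φ l := by
  simp only [IsReducedList, List.isChain_cons, List.forall_mem_cons]
  tauto

lemma IsReducedList.append {l₁ l₂ : List (Σ i, H i)} (h₁ : IsReducedList φ l₁)
    (h₂ : IsReducedList φ l₂) (h : ∀ x ∈ l₁.getLast?, ∀ y ∈ l₂.head?, x.1 ≠ y.1) :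
    IsReducedList φ (l₁ ++ l₂) :=
  ⟨h₁.1.append h₂.1 h, fun x hx => (List.mem_append.1 hx).elim (h₁.2 x) (h₂.2 x)⟩

lemma IsReducedList.flatten_replicate {l : List (Σ i, H i)} (hl : IsReducedList φ (l ++ l))
    (hne : l ≠ []) (m : ℕ) : IsReducedList φ (List.replicate m l).flatten := by
  obtain ⟨hchain, -, hjoin⟩ := List.isChain_append.1 hl.1
  refine ⟨(List.isChain_flatten (by simp [List.mem_replicate, hne.symm])).2
    ⟨fun l' hl' => ?_, List.isChain_replicate_of_rel m hjoin⟩, fun x hx => ?_⟩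
  · rwa [(List.mem_replicate.1 hl').2]
  · obtain ⟨l', hl', hx⟩ := List.mem_flatten.1 hx
    exact hl.2 x (List.mem_append_left _ ((List.mem_replicate.1 hl').2 ▸ hx))

lemma ofCoprodI_word_prod (w : Word H) :
    ofCoprodI (φ := φ) w.prod = listProd φ w.toList := by
  simp [Word.prod, listProd, map_list_prod, Function.comp_def, ofCoprodI_of]

lemma IsReducedList.eq_nil_of_listProd_mem_range (hinj : ∀ i, Function.Injective (φ i))
    {l : List (Σ i, H i)} (hl : IsReducedList φ l) (hmem : listProd φ l ∈ (base φ).range) :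
    l = [] := by
  let w : Word H := ⟨l, fun x hx h1 => hl.2 x hx (h1 ▸ one_mem _), hl.1⟩
  rw [← ofCoprodI_word_prod w] at hmem
  exact congrArg Word.toList (Reduced.eq_empty_of_mem_range (w := w) hinj hl.2 hmem)

-- `IsReducedList φ (l ++ l)` says that `l` is cyclically reduced.
lemma IsReducedList.not_isOfFinOrder_listProd (hinj : ∀ i, Function.Injective (φ i))
    {l : List (Σ i, H i)} (hl : IsReducedList φ (l ++ l)) (hne : l ≠ []) :
    ¬IsOfFinOrder (listProd φ l) := by
  intro hfin
  obtain ⟨m, hm, hpow⟩ := isOfFinOrder_iff_pow_eq_one.1 hfin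
  have := (hl.flatten_replicate hne m).eq_nil_of_listProd_mem_range hinj
    (by rw [listProd_flatten_replicate, hpow]; exact one_mem _)
  simp [hne, hm.ne'] at this

lemma exists_eq_base_mul_listProd (hinj : ∀ i, Function.Injective (φ i)) (g : PushoutI φ) :
    ∃ (k : K) (l : List (Σ i, H i)), IsReducedList φ l ∧ g = base φ k * listProd φ l := by
  classical
  obtain ⟨d⟩ := NormalWord.transversal_nonempty φ hinj
  let w : NormalWord d := NormalWord.equiv g
  refine ⟨w.head, w.toList, ⟨w.chain_ne, fun x hx hrange => w.ne_one x hx ?_⟩, ?_⟩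
  · -- the transversal meets the image of `φ i` only in its representative `1`
    have hself := (d.compl x.1).equiv_snd_eq_self_of_mem_of_one_mem (one_mem _)
      (w.normalized x.1 x.2 hx)
    rw [← ((d.compl x.1).coe_equiv_snd_eq_one_iff_mem (d.one_mem x.1)).2 hrange, hself]
  · calc g = w.prod := (NormalWord.equiv.symm_apply_apply g).symm
      _ = base φ w.head * listProd φ w.toList := by
        rw [NormalWord.prod, ofCoprodI_word_prod]

lemma not_isOfFinOrder_base_mul_listProd_cons_append (hinj : ∀ i, Function.Injective (φ i))
    {i j : ι} (hij : i ≠ j) {a : H i} {c : H j} {mid : List (Σ i, H i)}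
    (hl : IsReducedList φ (⟨i, a⟩ :: (mid ++ [⟨j, c⟩]))) (k : K) :
    ¬IsOfFinOrder (base φ k * listProd φ (⟨i, a⟩ :: (mid ++ [⟨j, c⟩]))) := by
  obtain ⟨ha, hi_mid, hrest⟩ := isReducedList_cons.1 hl
  set l' : List (Σ i, H i) := ⟨i, φ i k * a⟩ :: (mid ++ [⟨j, c⟩])
  have hl' : IsReducedList φ l' := isReducedList_cons.2
    ⟨(Subgroup.mul_mem_cancel_left (φ i).range ⟨k, rfl⟩).not.2 ha, hi_mid, hrest⟩
  have hcyc : ∀ x ∈ l'.getLast?, ∀ y ∈ l'.head?, x.1 ≠ y.1 := by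
    rw [show l' = (⟨i, φ i k * a⟩ :: mid) ++ [⟨j, c⟩] from rfl, List.getLast?_concat]
    simp [Ne.symm hij]
  have heq : base φ k * listProd φ (⟨i, a⟩ :: (mid ++ [⟨j, c⟩])) = listProd φ l' := by
    rw [listProd_cons, listProd_cons, ← mul_assoc, base_mul_of]
  rw [heq]
  exact (hl'.append hl' hcyc).not_isOfFinOrder_listProd hinj (List.cons_ne_nil _ _)

lemma isConj_base_mul_listProd_cons_append (i : ι) (a c : H i) (mid : List (Σ i, H i)) (k : K) :
    IsConj (of i (c * φ i k * a) * listProd φ mid)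
      (base φ k * listProd φ (⟨i, a⟩ :: (mid ++ [⟨i, c⟩]))) := by
  refine (isConj_iff.2 ⟨of i c, ?_⟩).symm
  simp only [listProd_cons, listProd_append, listProd_nil, map_mul, of_apply_eq_base]
  group

theorem exists_isConj_of_base_mul_listProd [Nonempty ι]
    (hinj : ∀ i, Function.Injective (φ i)) {l : List (Σ i, H i)} (hl : IsReducedList φ l)
    (k : K) (hfin : IsOfFinOrder (base φ k * listProd φ l)) :
    ∃ (i : ι) (h : H i), IsConj (of i h) (base φ k * listProd φ l) := by
  induction hlen : l.length using Nat.strong_induction_on generalizing l k with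
  | _ n ih =>
  rcases l with _ | ⟨⟨i, a⟩, rest⟩
  · refine ⟨Classical.arbitrary ι, φ _ k, ?_⟩
    rw [listProd_nil, mul_one, of_apply_eq_base]
  rcases rest.eq_nil_or_concat' with rfl | ⟨mid, ⟨j, c⟩, rfl⟩
  · refine ⟨i, φ i k * a, ?_⟩
    rw [listProd_cons, listProd_nil, mul_one, base_mul_of]
  rcases ne_or_eq i j with hij | rfl
  · exact absurd hfin (not_isOfFinOrder_base_mul_listProd_cons_append hinj hij hl k)
  obtain ⟨-, hi_mid, hrest⟩ := isReducedList_cons.1 hl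
  have hmid : IsReducedList φ mid :=
    ⟨hrest.1.left_of_append, fun x hx => hrest.2 x (List.mem_append_left _ hx)⟩
  have hconj := isConj_base_mul_listProd_cons_append (φ := φ) i a c mid k
  have hfin' := hconj.symm.isOfFinOrder hfin
  by_cases hz : c * φ i k * a ∈ (φ i).range
  · obtain ⟨k', hk'⟩ := hz
    rw [← hk', of_apply_eq_base] at hconj hfin'
    obtain ⟨i', h, hc⟩ := ih _ (by simp [← hlen]) hmid k' hfin' rfl
    exact ⟨i', h, hc.trans hconj⟩
  · have hz_mid : IsReducedList φ (⟨i, c * φ i k * a⟩ :: mid) := by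
      refine isReducedList_cons.2 ⟨hz, fun y hy => hi_mid y ?_, hmid⟩
      simp [List.head?_append, Option.mem_def.1 hy]
    have hone : base φ 1 * listProd φ (⟨i, c * φ i k * a⟩ :: mid) =
        of i (c * φ i k * a) * listProd φ mid := by
      simp
    rw [← hone] at hconj hfin'
    obtain ⟨i', h, hc⟩ := ih _ (by simp [← hlen]) hz_mid 1 hfin' rfl
    exact ⟨i', h, hc.trans hconj⟩

theorem exists_isConj_of_isOfFinOrder [Nonempty ι] (hinj : ∀ i, Function.Injective (φ i))
    {g : PushoutI φ} (hg : IsOfFinOrder g) : ∃ (i : ι) (h : H i), IsConj (of i h) g := by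
  obtain ⟨k, l, hl, rfl⟩ := exists_eq_base_mul_listProd hinj g
  exact exists_isConj_of_base_mul_listProd hinj hl k hg

theorem isTorsionFree [Nonempty ι] (hinj : ∀ i, Function.Injective (φ i))
    (htf : ∀ i, IsTorsionFree (H i)) : IsTorsionFree (PushoutI φ) := by
  intro g hg1 hg
  obtain ⟨i, h, hconj⟩ := exists_isConj_of_isOfFinOrder hinj hg
  have hh : h = 1 := by
    by_contra hh
    exact htf i h hh ((of_injective hinj i).isOfFinOrder_iff.1 (hconj.symm.isOfFinOrder hg))
  rw [hh, map_one, isConj_one_right] at hconj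
  exact hg1 hconj

end Monoid.PushoutI

theorem torsion_of_amalgamated_free_product
    {K : Type} [Group K] {H : Bool → Type} [∀ b, Group (H b)]
    (φ : ∀ b, K →* H b)
    (hinj : ∀ b, Function.Injective (φ b)) :
    (∀ g : PushoutI φ, (∃ n : ℕ, 1 ≤ n ∧ g ^ n = 1) →
        ∃ (b : Bool) (h : H b), IsConj (PushoutI.of (φ := φ) b h) g)
      ∧ ((∀ b, Monoid.IsTorsionFree (H b)) → Monoid.IsTorsionFree (PushoutI φ)) :=
  ⟨fun _ ⟨n, hn, hgn⟩ =>
    PushoutI.exists_isConj_of_isOfFinOrder hinj (isOfFinOrder_iff_pow_eq_one.2 ⟨n, hn, hgn⟩),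
    PushoutI.isTorsionFree hinj⟩
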